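/- arXiv:1212.1785 — 3 statements merged into one kernel-verified Lean document; each statement's English description precedes it below -/
import Mathlib

section
/- For a fixed lattice polytope P ⊂ ℚ^n with 0 in its interior, there are, up to GL_n(ℤ)-equivalence, only finitely many polytopes obtainable as combinatorial mutations mut_w(P,F) of P. -/
open Set Pointwise

noncomputable section

def pairing {n : ℕ} (w : Fin n → ℤ) (x : Fin n → ℚ) : ℚ :=
  ∑ i, (w i : ℚ) * x i

def IsLatticePt {n : ℕ} (x : Fin n → ℚ) : Prop := ∀ i, ∃ z : ℤ, x i = (z : ℚ)

def IsLatticePolytope {n : ℕ} (P : Set (Fin n → ℚ)) : Prop :=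
  ∃ S : Finset (Fin n → ℚ), (∀ x ∈ S, IsLatticePt x) ∧ P = convexHull ℚ (S : Set (Fin n → ℚ))

def IsPrimitive {n : ℕ} (w : Fin n → ℤ) : Prop := Finset.univ.gcd w = 1

def wSlice {n : ℕ} (w : Fin n → ℤ) (h : ℤ) (P : Set (Fin n → ℚ)) : Set (Fin n → ℚ) :=
  convexHull ℚ {x | x ∈ P ∧ IsLatticePt x ∧ pairing w x = (h : ℚ)}

def mutation {n : ℕ} (w : Fin n → ℤ) (P F : Set (Fin n → ℚ)) (G : ℤ → Set (Fin n → ℚ)) :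
    Set (Fin n → ℚ) :=
  convexHull ℚ ((⋃ h : ℤ, ⋃ _ : h < 0, G h) ∪
    ⋃ h : ℤ, ⋃ _ : 0 ≤ h, (wSlice w h P + (h : ℚ) • F))

def IsMutData {n : ℕ} (w : Fin n → ℤ) (P F : Set (Fin n → ℚ))
    (G : ℤ → Set (Fin n → ℚ)) : Prop :=
  IsLatticePolytope F ∧ F.Nonempty ∧ (∀ x ∈ F, pairing w x = 0) ∧
  ∀ h : ℤ, h < 0 →
    (G h = ∅ ∨ IsLatticePolytope (G h)) ∧
    {v | v ∈ P.extremePoints ℚ ∧ pairing w v = (h : ℚ)} ⊆ G h + (-(h : ℚ)) • F ∧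
    G h + (-(h : ℚ)) • F ⊆ wSlice w h P

def dpair {n : ℕ} (u v : Fin n → ℚ) : ℚ := ∑ i, u i * v i

def dualP {n : ℕ} (P : Set (Fin n → ℚ)) : Set (Fin n → ℚ) := {u | ∀ v ∈ P, -1 ≤ dpair u v}

/-- Two subsets of `ℚ^n` are `GL_n(ℤ)`-equivalent if one is the image of the other under a
linear automorphism preserving the lattice `ℤ^n` in both directions. -/
def LatticeEquiv {n : ℕ} (Q Q' : Set (Fin n → ℚ)) : Prop :=
  ∃ A : (Fin n → ℚ) ≃ₗ[ℚ] (Fin n → ℚ),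
    (∀ x, IsLatticePt x → IsLatticePt (A x)) ∧
    (∀ x, IsLatticePt x → IsLatticePt (A.symm x)) ∧
    A '' Q = Q'

lemma pairing_add {n : ℕ} (w : Fin n → ℤ) (x y : Fin n → ℚ) :
    pairing w (x + y) = pairing w x + pairing w y := by
  simp [pairing, mul_add, Finset.sum_add_distrib]

lemma pairing_smul {n : ℕ} (w : Fin n → ℤ) (c : ℚ) (x : Fin n → ℚ) :
    pairing w (c • x) = c * pairing w x := by
  simp only [pairing, Finset.mul_sum, Pi.smul_apply, smul_eq_mul]
  exact Finset.sum_congr rfl fun i _ => by ring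

def pairingLM {n : ℕ} (w : Fin n → ℤ) : (Fin n → ℚ) →ₗ[ℚ] ℚ where
  toFun := pairing w
  map_add' := pairing_add w
  map_smul' := fun c x => pairing_smul w c x

@[simp] lemma pairingLM_apply {n : ℕ} (w : Fin n → ℤ) (x : Fin n → ℚ) :
    pairingLM w x = pairing w x := rfl

lemma IsLatticePt.add_zsmul {n : ℕ} {x y : Fin n → ℚ} (hx : IsLatticePt x)
    (hy : IsLatticePt y) (z : ℤ) : IsLatticePt (x + (z : ℚ) • y) := by
  intro i
  obtain ⟨a, ha⟩ := hx i
  obtain ⟨b, hb⟩ := hy i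
  exact ⟨a + z * b, by simp [ha, hb]⟩

lemma IsLatticePt.pairing_int {n : ℕ} {w : Fin n → ℤ} {x : Fin n → ℚ}
    (hx : IsLatticePt x) : ∃ z : ℤ, pairing w x = (z : ℚ) := by
  have : ∀ i, x i = ((fun i => (hx i).choose) i : ℚ) := fun i => (hx i).choose_spec
  refine ⟨∑ i, w i * (hx i).choose, ?_⟩
  unfold pairing
  push_cast
  exact Finset.sum_congr rfl fun i _ => by rw [← this i]
variable {n : ℕ}

-- on a convex hull, a linear functional is bounded below by its bound on the generators
lemma hull_le {S : Set (Fin n → ℚ)} {c : (Fin n → ℚ) →ₗ[ℚ] ℚ} {m : ℚ}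
    (hm : ∀ z ∈ S, m ≤ c z) : ∀ x ∈ convexHull ℚ S, m ≤ c x := by
  intro x hx
  have : convexHull ℚ S ⊆ {z | m ≤ c z} :=
    convexHull_min hm ((convex_Ici m).linear_preimage c)
  exact this hx

lemma hull_eq_level {S : Set (Fin n → ℚ)} {c : (Fin n → ℚ) →ₗ[ℚ] ℚ} {m : ℚ}
    (hm : ∀ z ∈ S, c z = m) : ∀ x ∈ convexHull ℚ S, c x = m := by
  intro x hx
  have : convexHull ℚ S ⊆ {z | c z = m} :=
    convexHull_min (fun z hz => hm z hz) ((convex_singleton m).linear_preimage c)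
  exact this hx

-- face lemma: a point of the hull where a lower bound of c is attained lies in
-- the hull of the minimizing generators
lemma face_subset {T : Finset (Fin n → ℚ)} {c : (Fin n → ℚ) →ₗ[ℚ] ℚ} {m : ℚ}
    (hm : ∀ z ∈ T, m ≤ c z) {x : Fin n → ℚ}
    (hx : x ∈ convexHull ℚ (T : Set (Fin n → ℚ))) (hcx : c x = m) :
    x ∈ convexHull ℚ ((T.filter fun z => c z = m : Finset (Fin n → ℚ)) :
      Set (Fin n → ℚ)) := by
  rw [Finset.mem_convexHull'] at hx
  obtain ⟨u, hu0, hu1, hux⟩ := hx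
  have hcsum : ∑ y ∈ T, u y * c y = m := by
    have := congrArg c hux
    rw [map_sum] at this
    simp only [map_smul, smul_eq_mul] at this
    rw [this, hcx]
  have hzero : ∀ y ∈ T, u y * (c y - m) = 0 := by
    have hsum0 : ∑ y ∈ T, u y * (c y - m) = 0 := by
      have : ∑ y ∈ T, u y * (c y - m) = (∑ y ∈ T, u y * c y) - (∑ y ∈ T, u y) * m := by
        rw [Finset.sum_mul, ← Finset.sum_sub_distrib]
        exact Finset.sum_congr rfl fun y _ => by ring
      rw [this, hcsum, hu1, one_mul, sub_self]
    exact (Finset.sum_eq_zero_iff_of_nonneg fun y hy =>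
      mul_nonneg (hu0 y hy) (by linarith [hm y hy])).1 hsum0
  rw [Finset.mem_convexHull']
  have hkey : ∀ y ∈ T, y ∉ T.filter (fun z => c z = m) → u y = 0 := by
    intro y hy hy'
    have hne : c y ≠ m := fun h => hy' (Finset.mem_filter.2 ⟨hy, h⟩)
    have := hzero y hy
    rcases mul_eq_zero.1 this with h | h
    · exact h
    · exact absurd (by linarith [sub_eq_zero.1 h] : c y = m) hne
  refine ⟨u, fun y hy => hu0 y (Finset.mem_filter.1 hy).1, ?_, ?_⟩
  · rw [Finset.sum_subset (Finset.filter_subset _ _) hkey]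
    exact hu1
  · rw [Finset.sum_subset (Finset.filter_subset _ _)
      (fun y hy hy' => by rw [hkey y hy hy', zero_smul])]
    exact hux

open scoped Classical in
def minStep (T : Finset (Fin n → ℚ)) (c : (Fin n → ℚ) →ₗ[ℚ] ℚ) : Finset (Fin n → ℚ) :=
  T.filter fun x => ∀ y ∈ T, c x ≤ c y

lemma minStep_subset (T : Finset (Fin n → ℚ)) (c : (Fin n → ℚ) →ₗ[ℚ] ℚ) :
    minStep T c ⊆ T := Finset.filter_subset _ _

lemma minStep_nonempty {T : Finset (Fin n → ℚ)} (hT : T.Nonempty)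
    (c : (Fin n → ℚ) →ₗ[ℚ] ℚ) : (minStep T c).Nonempty := by
  classical
  obtain ⟨b, hb, hb'⟩ := T.exists_min_image c hT
  exact ⟨b, Finset.mem_filter.2 ⟨hb, hb'⟩⟩

lemma minStep_min {T : Finset (Fin n → ℚ)} {c : (Fin n → ℚ) →ₗ[ℚ] ℚ} {v : Fin n → ℚ}
    (hv : v ∈ minStep T c) : v ∈ T ∧ ∀ y ∈ T, c v ≤ c y := by
  classical
  unfold minStep at hv
  simp only [Finset.mem_filter] at hv
  exact hv

lemma step_mem {T : Finset (Fin n → ℚ)} {c : (Fin n → ℚ) →ₗ[ℚ] ℚ} {v x₁ x₂ : Fin n → ℚ}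
    (hv : v ∈ minStep T c) (h1 : x₁ ∈ convexHull ℚ (T : Set (Fin n → ℚ)))
    (h2 : x₂ ∈ convexHull ℚ (T : Set (Fin n → ℚ)))
    (hseg : v ∈ openSegment ℚ x₁ x₂) :
    x₁ ∈ convexHull ℚ ((minStep T c : Finset (Fin n → ℚ)) : Set (Fin n → ℚ)) ∧
    x₂ ∈ convexHull ℚ ((minStep T c : Finset (Fin n → ℚ)) : Set (Fin n → ℚ)) := by
  classical
  obtain ⟨hvT, hmin⟩ := minStep_min hv
  set m := c v with hm
  have hp : m ≤ c x₁ := hull_le hmin x₁ h1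
  have hq : m ≤ c x₂ := hull_le hmin x₂ h2
  obtain ⟨a, b, ha, hb, hab, heq⟩ := hseg
  have hsum : a * c x₁ + b * c x₂ = m := by
    rw [hm, ← heq, map_add, map_smul, map_smul, smul_eq_mul, smul_eq_mul]
  have e1 : a * (c x₁ - m) + b * (c x₂ - m) = 0 := by
    have : (a + b) * m = m := by rw [hab, one_mul]
    nlinarith [hsum]
  have t1 : 0 ≤ a * (c x₁ - m) := mul_nonneg ha.le (by linarith)
  have t2 : 0 ≤ b * (c x₂ - m) := mul_nonneg hb.le (by linarith)
  have hx1 : c x₁ = m := by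
    have : a * (c x₁ - m) = 0 := by linarith
    rcases mul_eq_zero.1 this with h | h
    · exact absurd h ha.ne'
    · linarith [sub_eq_zero.1 h]
  have hx2 : c x₂ = m := by
    have : b * (c x₂ - m) = 0 := by linarith
    rcases mul_eq_zero.1 this with h | h
    · exact absurd h hb.ne'
    · linarith [sub_eq_zero.1 h]
  have hfsub : (T.filter fun z => c z = m) ⊆ minStep T c := by
    intro z hz
    obtain ⟨hzT, hzm⟩ := Finset.mem_filter.1 hz
    refine Finset.mem_filter.2 ⟨hzT, ?_⟩
    intro y hy
    rw [hzm]
    exact hmin y hy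
  have hsub' : ((T.filter fun z => c z = m : Finset (Fin n → ℚ)) :
      Set (Fin n → ℚ)) ⊆ ((minStep T c : Finset (Fin n → ℚ)) : Set (Fin n → ℚ)) :=
    Finset.coe_subset.2 hfsub
  have hmono : convexHull ℚ ((T.filter fun z => c z = m : Finset (Fin n → ℚ)) :
      Set (Fin n → ℚ)) ⊆ convexHull ℚ ((minStep T c : Finset (Fin n → ℚ)) :
      Set (Fin n → ℚ)) := convexHull_mono hsub'
  exact ⟨hmono (face_subset hmin h1 hx1), hmono (face_subset hmin h2 hx2)⟩

lemma exists_extremePoint_min (S : Finset (Fin n → ℚ)) (hS : S.Nonempty)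
    (c : (Fin n → ℚ) →ₗ[ℚ] ℚ) :
    ∃ v ∈ S, v ∈ Set.extremePoints ℚ (convexHull ℚ (S : Set (Fin n → ℚ))) ∧
      ∀ s ∈ S, c v ≤ c s := by
  classical
  set cfun : ℕ → ((Fin n → ℚ) →ₗ[ℚ] ℚ) :=
    fun k => if h : k < n then LinearMap.proj (⟨k, h⟩ : Fin n) else 0 with hcfun
  set T : ℕ → Finset (Fin n → ℚ) :=
    fun k => Nat.rec (minStep S c) (fun k Tk => minStep Tk (cfun k)) k with hT
  have hTsucc : ∀ k, T (k + 1) = minStep (T k) (cfun k) := fun k => rfl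
  have hne : ∀ k, (T k).Nonempty := by
    intro k
    induction k with
    | zero => exact minStep_nonempty hS c
    | succ k ih => exact minStep_nonempty ih _
  have hsub : ∀ k, T (k + 1) ⊆ T k := fun k => minStep_subset _ _
  have hmono : ∀ j k, j ≤ k → T k ⊆ T j := by
    intro j k hjk
    induction k with
    | zero => rw [Nat.le_zero.1 hjk]
    | succ k ih =>
      rcases Nat.lt_or_ge j (k+1) with h | h
      · exact (hsub k).trans (ih (Nat.lt_succ_iff.1 h))
      · rw [Nat.le_antisymm hjk h]
  have hTS : ∀ k, T k ⊆ S := by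
    intro k
    induction k with
    | zero => exact minStep_subset _ _
    | succ k ih => exact (minStep_subset _ _).trans ih
  obtain ⟨v, hvTn⟩ := hne n
  have huniq : ∀ z ∈ T n, z = v := by
    intro z hz
    funext i
    have hi : (i : ℕ) + 1 ≤ n := i.isLt
    have hz' : z ∈ T ((i : ℕ) + 1) := hmono _ _ hi hz
    have hv' : v ∈ T ((i : ℕ) + 1) := hmono _ _ hi hvTn
    rw [hTsucc] at hz' hv'
    obtain ⟨hzT, hzmin⟩ := minStep_min hz'
    obtain ⟨hvT, hvmin⟩ := minStep_min hv'
    have hc : cfun (i : ℕ) = LinearMap.proj i := by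
      rw [hcfun]
      simp [i.isLt]
    have h1 := hzmin v (minStep_subset _ _ hv')
    have h2 := hvmin z (minStep_subset _ _ hz')
    rw [hc] at h1 h2
    exact le_antisymm h1 h2
  have hvS : v ∈ S := hTS n hvTn
  have hv0 : v ∈ T 0 := hmono 0 n (Nat.zero_le n) hvTn
  obtain ⟨_, hvmin⟩ := minStep_min (show v ∈ minStep S c from hv0)
  refine ⟨v, hvS, ?_, hvmin⟩
  rw [mem_extremePoints]
  refine ⟨subset_convexHull ℚ _ hvS, ?_⟩
  intro x₁ h₁ x₂ h₂ hseg
  have chain : ∀ k, k ≤ n →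
      x₁ ∈ convexHull ℚ ((T k : Finset (Fin n → ℚ)) : Set (Fin n → ℚ)) ∧
      x₂ ∈ convexHull ℚ ((T k : Finset (Fin n → ℚ)) : Set (Fin n → ℚ)) := by
    intro k
    induction k with
    | zero =>
      intro _
      exact step_mem hv0 h₁ h₂ hseg
    | succ k ih =>
      intro hk
      obtain ⟨ih1, ih2⟩ := ih (Nat.le_of_succ_le hk)
      have hvk : v ∈ T (k + 1) := hmono _ _ hk hvTn
      rw [hTsucc] at hvk ⊢
      exact step_mem hvk ih1 ih2 hseg
  obtain ⟨hx1, hx2⟩ := chain n le_rfl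
  have hTn_sub : ((T n : Finset (Fin n → ℚ)) : Set (Fin n → ℚ)) ⊆ {v} := by
    intro z hz
    exact huniq z hz
  have h1v : x₁ ∈ ({v} : Set (Fin n → ℚ)) := by
    have := convexHull_mono hTn_sub hx1
    rwa [convexHull_singleton] at this
  have h2v : x₂ ∈ ({v} : Set (Fin n → ℚ)) := by
    have := convexHull_mono hTn_sub hx2
    rwa [convexHull_singleton] at this
  exact ⟨h1v, h2v⟩

lemma lattice_box_finite (C : ℚ) :
    {x : Fin n → ℚ | IsLatticePt x ∧ ∀ i, |x i| ≤ C}.Finite := by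
  classical
  set M : ℤ := ⌈C⌉ with hM
  have hfin : (Set.pi (Set.univ : Set (Fin n)) fun _ => (Set.Icc (-M) M : Set ℤ)).Finite :=
    Set.Finite.pi fun _ => Set.finite_Icc _ _
  refine (hfin.image fun y : Fin n → ℤ => fun i => ((y i : ℚ))).subset ?_
  rintro x ⟨hlat, hbox⟩
  refine ⟨fun i => (hlat i).choose, ?_, ?_⟩
  · intro i _
    have hxi : x i = ((hlat i).choose : ℚ) := (hlat i).choose_spec
    have habs : |((hlat i).choose : ℚ)| ≤ (M : ℚ) := by
      rw [← hxi]
      exact (hbox i).trans (Int.le_ceil C)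
    have h1 : ((hlat i).choose : ℚ) ≤ (M : ℚ) := (abs_le.1 habs).2
    have h2 : -(M : ℚ) ≤ ((hlat i).choose : ℚ) := (abs_le.1 habs).1
    constructor
    · exact_mod_cast h2
    · exact_mod_cast h1
  · funext i
    exact ((hlat i).choose_spec).symm

lemma lattPts_hull {X : Set (Fin n → ℚ)} (hX : IsLatticePolytope X) :
    X = convexHull ℚ {x ∈ X | IsLatticePt x} := by
  obtain ⟨S, hS, rfl⟩ := hX
  apply Subset.antisymm
  · have hsub : (S : Set (Fin n → ℚ)) ⊆
        {x ∈ convexHull ℚ (S : Set (Fin n → ℚ)) | IsLatticePt x} :=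
      fun s hs => ⟨subset_convexHull ℚ _ hs, hS s hs⟩
    have h2 : convexHull ℚ (S : Set (Fin n → ℚ)) ⊆ convexHull ℚ
        (convexHull ℚ {x ∈ convexHull ℚ (S : Set (Fin n → ℚ)) | IsLatticePt x}) := by
      intro x hx
      exact subset_convexHull ℚ _ (convexHull_mono hsub hx)
    rwa [(convex_convexHull ℚ _).convexHull_eq] at h2
  · exact convexHull_min (Set.sep_subset _ _) (convex_convexHull ℚ _)

def shearMap (w : Fin n → ℤ) (f0 : Fin n → ℚ) : (Fin n → ℚ) →ₗ[ℚ] (Fin n → ℚ) where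
  toFun x := x - pairing w x • f0
  map_add' x y := by
    rw [pairing_add, add_smul]
    abel
  map_smul' c x := by
    simp only [RingHom.id_apply]
    rw [pairing_smul, mul_smul, smul_sub]

lemma pairing_neg (w : Fin n → ℤ) (x : Fin n → ℚ) : pairing (-w) x = -pairing w x := by
  unfold pairing
  rw [← Finset.sum_neg_distrib]
  exact Finset.sum_congr rfl fun i _ => by rw [Pi.neg_apply]; push_cast; ring

lemma shear_inv (w : Fin n → ℤ) (f0 : Fin n → ℚ) (hf0 : pairing w f0 = 0) (x : Fin n → ℚ) :
    shearMap (-w) f0 (shearMap w f0 x) = x := by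
  show (x - pairing w x • f0) - pairing (-w) (x - pairing w x • f0) • f0 = x
  have h1 : x - pairing w x • f0 = x + (-(pairing w x)) • f0 := by
    rw [neg_smul, ← sub_eq_add_neg]
  have h2 : pairing (-w) (x - pairing w x • f0) = -(pairing w x) := by
    rw [h1, pairing_neg, pairing_add, pairing_smul, hf0, mul_zero, add_zero]
  rw [h2, neg_smul, sub_neg_eq_add, sub_add_cancel]

def shearEquiv (w : Fin n → ℤ) (f0 : Fin n → ℚ) (hf0 : pairing w f0 = 0) :
    (Fin n → ℚ) ≃ₗ[ℚ] (Fin n → ℚ) :=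
  LinearEquiv.ofLinear (shearMap w f0) (shearMap (-w) f0)
    (by
      apply LinearMap.ext
      intro x
      have := shear_inv (-w) f0 (by rw [pairing_neg, hf0, neg_zero]) x
      rw [neg_neg] at this
      exact this)
    (by
      apply LinearMap.ext
      intro x
      exact shear_inv w f0 hf0 x)

lemma shearEquiv_apply (w : Fin n → ℤ) (f0 : Fin n → ℚ) (hf0 : pairing w f0 = 0)
    (x : Fin n → ℚ) : shearEquiv w f0 hf0 x = x - pairing w x • f0 := rfl

lemma shearEquiv_symm_apply (w : Fin n → ℤ) (f0 : Fin n → ℚ) (hf0 : pairing w f0 = 0)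
    (x : Fin n → ℚ) : (shearEquiv w f0 hf0).symm x = x + pairing w x • f0 := by
  show x - pairing (-w) x • f0 = x + pairing w x • f0
  rw [pairing_neg, neg_smul, sub_neg_eq_add]

set_option maxHeartbeats 2000000 in
/-- Up to `GL_n(ℤ)`-equivalence, a fixed lattice polytope `P` with `0` in its interior has
only finitely many combinatorial mutations. -/
theorem finitely_many_mutations {n : ℕ} (P : Set (Fin n → ℚ))
    (hP : IsLatticePolytope P) (h0 : (0 : Fin n → ℚ) ∈ interior P) :
    ∃ L : Set (Set (Fin n → ℚ)), L.Finite ∧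
      ∀ (w : Fin n → ℤ) (F : Set (Fin n → ℚ)) (G : ℤ → Set (Fin n → ℚ)),
        IsPrimitive w → IsMutData w P F G →
          ∃ Q' ∈ L, LatticeEquiv (mutation w P F G) Q' := by
  classical
  obtain ⟨S, hSlat, hSeq⟩ := hP
  have hPconv : Convex ℚ P := by rw [hSeq]; exact convex_convexHull ℚ _
  -- a bound R on the coordinates of points of P
  set R : ℚ := 1 + ∑ s ∈ S, ∑ i, |s i| with hRdef
  have hR1 : (1 : ℚ) ≤ R := by
    have h1 : (0:ℚ) ≤ ∑ s ∈ S, ∑ i, |s i| :=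
      Finset.sum_nonneg fun s _ => Finset.sum_nonneg fun i _ => abs_nonneg _
    simp only [hRdef]; linarith
  have hR0 : (0:ℚ) < R := lt_of_lt_of_le one_pos hR1
  have hbox : ∀ x ∈ P, ∀ i, |x i| ≤ R := by
    have hSbox : ∀ s ∈ S, ∀ i, |s i| ≤ R := by
      intro s hs i
      have h1 : |s i| ≤ ∑ j, |s j| :=
        Finset.single_le_sum (f := fun j => |s j|) (fun j _ => abs_nonneg _)
          (Finset.mem_univ i)
      have h2 : ∑ j, |s j| ≤ ∑ s ∈ S, ∑ j, |s j| := by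
        have := Finset.single_le_sum (s := S) (f := fun v : Fin n → ℚ => ∑ j, |v j|)
          (fun v _ => Finset.sum_nonneg fun j _ => abs_nonneg _) hs
        exact this
      simp only [hRdef]; linarith
    have hconvbox : Convex ℚ {x : Fin n → ℚ | ∀ i, |x i| ≤ R} := by
      intro x hx y hy a b ha hb hab i
      have : (a • x + b • y) i = a * x i + b * y i := rfl
      rw [this]
      calc |a * x i + b * y i| ≤ |a * x i| + |b * y i| := abs_add_le _ _
        _ = a * |x i| + b * |y i| := by
            rw [abs_mul, abs_mul, abs_of_nonneg ha, abs_of_nonneg hb]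
        _ ≤ a * R + b * R := add_le_add
            (mul_le_mul_of_nonneg_left (hx i) ha) (mul_le_mul_of_nonneg_left (hy i) hb)
        _ = R := by rw [← add_mul, hab, one_mul]
    intro x hx
    have hsub : P ⊆ {x : Fin n → ℚ | ∀ i, |x i| ≤ R} := by
      rw [hSeq]; exact convexHull_min (fun s hs => hSbox s hs) hconvbox
    exact hsub hx
  -- a rational β > 0 with the β-box inside P
  obtain ⟨β, hβ0, hβmem⟩ : ∃ β : ℚ, 0 < β ∧
      ∀ x : Fin n → ℚ, (∀ i, |x i| ≤ β) → x ∈ P := by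
    rw [mem_interior_iff_mem_nhds, Metric.mem_nhds_iff] at h0
    obtain ⟨ε, hε, hball⟩ := h0
    obtain ⟨q, hq1, hq2⟩ := exists_rat_btwn hε
    have hq0 : (0:ℚ) < q := by exact_mod_cast hq1
    refine ⟨q / 2, by positivity, ?_⟩
    intro x hx
    apply hball
    rw [Metric.mem_ball]
    rw [dist_pi_lt_iff hε]
    intro i
    have : dist (x i) ((0 : Fin n → ℚ) i) = |((x i : ℝ)) - ((0:ℚ) : ℝ)| := Rat.dist_eq _ _
    rw [this]
    have h1 : |x i| ≤ q / 2 := hx i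
    have h2 : ((|x i| : ℚ) : ℝ) < ε := by
      have : (q:ℝ)/2 < ε := by linarith
      have hc : ((|x i| : ℚ) : ℝ) ≤ (q:ℝ)/2 := by exact_mod_cast h1
      linarith
    simpa [Rat.cast_abs] using h2
  have h0P : (0 : Fin n → ℚ) ∈ P := hβmem 0 fun i => by simp [hβ0.le]
  set C : ℚ := R + 4 * R ^ 2 / β with hCdef
  have hRC : R ≤ C := by
    have : (0:ℚ) ≤ 4 * R ^ 2 / β := by positivity
    simp only [hCdef]; linarith
  set K : Set (Fin n → ℚ) := {x | IsLatticePt x ∧ ∀ i, |x i| ≤ C} with hKdef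
  have hK : K.Finite := lattice_box_finite C
  refine ⟨(fun T => convexHull ℚ T) '' {T | T ⊆ K}, hK.finite_subsets.image _, ?_⟩
  intro w F G hw hmut
  obtain ⟨hFpoly, hFne, hF0, hG⟩ := hmut
  -- the weight W
  set W : ℚ := ∑ i, |(w i : ℚ)| with hWdef
  have hW0 : (0:ℚ) ≤ W := Finset.sum_nonneg fun i _ => abs_nonneg _
  have hW1 : (1:ℚ) ≤ W := by
    have hwne : ∃ i, w i ≠ 0 := by
      by_contra hcon
      push_neg at hcon
      have hz : Finset.univ.gcd w = 0 := Finset.gcd_eq_zero_iff.2 fun i _ => hcon i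
      rw [hw] at hz
      exact one_ne_zero hz
    obtain ⟨i0, hi0⟩ := hwne
    have h1 : (1:ℚ) ≤ |(w i0 : ℚ)| := by
      have : (1:ℤ) ≤ |w i0| := Int.one_le_abs hi0
      have h2 : ((|w i0| : ℤ) : ℚ) = |(w i0 : ℚ)| := by push_cast; ring
      rw [← h2]
      exact_mod_cast this
    have h3 := Finset.single_le_sum (s := (Finset.univ : Finset (Fin n)))
      (f := fun i => |(w i : ℚ)|) (fun i _ => abs_nonneg _) (Finset.mem_univ i0)
    exact h1.trans h3
  have hWpos : (0:ℚ) < W := lt_of_lt_of_le one_pos hW1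
  have hpairB : ∀ x ∈ P, |pairing w x| ≤ R * W := by
    intro x hx
    have h1 : |pairing w x| ≤ ∑ i, |(w i : ℚ) * x i| := Finset.abs_sum_le_sum_abs _ _
    have h2 : ∑ i, |(w i : ℚ) * x i| ≤ ∑ i, |(w i : ℚ)| * R := by
      refine Finset.sum_le_sum fun i _ => ?_
      rw [abs_mul]
      exact mul_le_mul_of_nonneg_left (hbox x hx i) (abs_nonneg _)
    have h3 : ∑ i, |(w i : ℚ)| * R = R * W := by
      rw [← Finset.sum_mul]
      ring
    linarith
  -- a lattice vertex f0 of F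
  obtain ⟨FS, hFSlat, hFSeq⟩ := hFpoly
  have hFSne : FS.Nonempty := by
    obtain ⟨f, hf⟩ := hFne
    rw [hFSeq] at hf
    by_contra hcon
    rw [Finset.not_nonempty_iff_eq_empty.1 hcon] at hf
    simp at hf
  obtain ⟨f0, hf0FS⟩ := hFSne
  have hf0F : f0 ∈ F := by rw [hFSeq]; exact subset_convexHull ℚ _ hf0FS
  have hf0lat : IsLatticePt f0 := hFSlat f0 hf0FS
  have hf0pair : pairing w f0 = 0 := hF0 f0 hf0F
  have hFlatpoly : IsLatticePolytope F := ⟨FS, hFSlat, hFSeq⟩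
  -- an extreme point of P minimizing the pairing
  have hSne : S.Nonempty := by
    by_contra hcon
    rw [Finset.not_nonempty_iff_eq_empty.1 hcon] at hSeq
    rw [hSeq] at h0P
    simp at h0P
  obtain ⟨v, hvS, hvext, hvmin⟩ := exists_extremePoint_min S hSne (pairingLM w)
  have hvminP : ∀ x ∈ P, pairing w v ≤ pairing w x := by
    intro x hx
    rw [hSeq] at hx
    exact hull_le (c := pairingLM w) (m := pairing w v) (fun s hs => hvmin s hs) x hx
  -- pairing w v ≤ -(β * W)
  have hsignabs : ∀ i, (w i : ℚ) * ((Int.sign (w i) : ℤ) : ℚ) = |(w i : ℚ)| := by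
    intro i
    rcases lt_trichotomy (w i) 0 with h | h | h
    · rw [Int.sign_eq_neg_one_of_neg h]
      have : (w i : ℚ) < 0 := by exact_mod_cast h
      rw [abs_of_neg this]
      push_cast
      ring
    · simp [h]
    · rw [Int.sign_eq_one_of_pos h]
      have : (0:ℚ) < (w i : ℚ) := by exact_mod_cast h
      rw [abs_of_pos this]
      push_cast
      ring
  set xstar : Fin n → ℚ := fun i => -β * ((Int.sign (w i) : ℤ) : ℚ) with hxstardef
  have hxstar_mem : xstar ∈ P := by
    apply hβmem
    intro i
    have hs1 : |((Int.sign (w i) : ℤ) : ℚ)| ≤ 1 := by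
      rcases lt_trichotomy (w i) 0 with h | h | h
      · rw [Int.sign_eq_neg_one_of_neg h]; norm_num
      · simp [h]
      · rw [Int.sign_eq_one_of_pos h]; norm_num
    have : |xstar i| = β * |((Int.sign (w i) : ℤ) : ℚ)| := by
      rw [hxstardef]
      simp only []
      rw [abs_mul, abs_neg, abs_of_pos hβ0]
    rw [this]
    calc β * |((Int.sign (w i) : ℤ) : ℚ)| ≤ β * 1 :=
          mul_le_mul_of_nonneg_left hs1 hβ0.le
      _ = β := mul_one β
  have hxstar_pair : pairing w xstar = -(β * W) := by
    unfold pairing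
    have hterm : ∀ i, (w i : ℚ) * xstar i = -β * |(w i : ℚ)| := by
      intro i
      rw [hxstardef]
      simp only []
      rw [← hsignabs i]
      ring
    rw [Finset.sum_congr rfl fun i _ => hterm i, ← Finset.mul_sum, ← hWdef]
    ring
  have hm_neg : pairing w v ≤ -(β * W) := by
    have := hvminP xstar hxstar_mem
    linarith [hxstar_pair ▸ this]
  -- the integer height z of v
  have hvlat : IsLatticePt v := hSlat v hvS
  obtain ⟨z, hz⟩ := hvlat.pairing_int (w := w)
  have hβW0 : (0:ℚ) < β * W := mul_pos hβ0 hWpos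
  have hzQ : (z : ℚ) ≤ -(β * W) := hz ▸ hm_neg
  have hzneg : z < 0 := by
    have : (z:ℚ) < 0 := lt_of_le_of_lt hzQ (by linarith)
    exact_mod_cast this
  have hzβW : β * W ≤ -(z:ℚ) := by linarith
  -- v decomposes over G z and F
  obtain ⟨-, hGz_ext, hGz_sub⟩ := hG z hzneg
  have hvP_ext : v ∈ P.extremePoints ℚ := by rw [hSeq]; exact hvext
  have hvP : v ∈ P := hvP_ext.1
  have hvmem : v ∈ G z + (-(z:ℚ)) • F := hGz_ext ⟨hvP_ext, hz⟩
  rw [Set.mem_add] at hvmem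
  obtain ⟨g, hg, bb, hbb, hgb⟩ := hvmem
  obtain ⟨fv, hfv, hfveq⟩ := hbb
  -- wSlice facts
  have hslice_subP : ∀ h : ℤ, wSlice w h P ⊆ P := fun h =>
    convexHull_min (fun x hx => hx.1) hPconv
  have hslice_level : ∀ h : ℤ, ∀ x ∈ wSlice w h P, pairing w x = (h:ℚ) := fun h x hx =>
    hull_eq_level (c := pairingLM w) (m := (h:ℚ)) (fun y hy => hy.2.2) x hx
  -- diameter bound for F
  have hFdiam : ∀ f ∈ F, ∀ i, (β * W) * |f i - fv i| ≤ 2 * R := by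
    intro f hf i
    have h1 : g + (-(z:ℚ)) • f ∈ P :=
      hslice_subP z (hGz_sub (Set.add_mem_add hg (Set.smul_mem_smul_set hf)))
    have hdiff : (-(z:ℚ)) * (f i - fv i) = (g + (-(z:ℚ)) • f) i - v i := by
      rw [← hgb, ← hfveq]
      show -(z:ℚ) * (f i - fv i) = (g i + -(z:ℚ) * f i) - (g i + -(z:ℚ) * fv i)
      ring
    have h3 : |(-(z:ℚ))| * |f i - fv i| ≤ 2 * R := by
      rw [← abs_mul, hdiff]
      calc |(g + (-(z:ℚ)) • f) i - v i| ≤ |(g + (-(z:ℚ)) • f) i| + |v i| := abs_sub _ _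
        _ ≤ R + R := add_le_add (hbox _ h1 i) (hbox _ hvP i)
        _ = 2 * R := by ring
    have h4 : |(-(z:ℚ))| = -(z:ℚ) := abs_of_pos (by
      have : (z:ℚ) < 0 := by exact_mod_cast hzneg
      linarith)
    calc (β * W) * |f i - fv i| ≤ (-(z:ℚ)) * |f i - fv i| :=
          mul_le_mul_of_nonneg_right hzβW (abs_nonneg _)
      _ ≤ 2 * R := h4 ▸ h3
  -- the shear and the generating set T0
  set A := shearEquiv w f0 hf0pair with hAdef
  set lattF : Set (Fin n → ℚ) := {x ∈ F | IsLatticePt x} with hlattFdef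
  set T0 : Set (Fin n → ℚ) := (⋃ h : ℤ, ⋃ _ : h < 0, {x ∈ G h | IsLatticePt x}) ∪
    ⋃ h : ℤ, ⋃ _ : (0:ℤ) ≤ h,
      ({x | x ∈ P ∧ IsLatticePt x ∧ pairing w x = (h:ℚ)} + (h:ℚ) • lattF) with hT0def
  have hQ : mutation w P F G = convexHull ℚ T0 := by
    apply Subset.antisymm
    · unfold mutation
      apply convexHull_min _ (convex_convexHull ℚ T0)
      apply Set.union_subset
      · intro x hx
        simp only [Set.mem_iUnion] at hx
        obtain ⟨h, hneg, hxG⟩ := hx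
        rcases (hG h hneg).1 with hemp | hpoly
        · rw [hemp] at hxG
          exact absurd hxG (Set.notMem_empty x)
        · have heq := lattPts_hull hpoly
          have hsub : {y ∈ G h | IsLatticePt y} ⊆ T0 := by
            rw [hT0def]
            intro y hy
            apply Set.mem_union_left
            simp only [Set.mem_iUnion]
            exact ⟨h, hneg, hy⟩
          have h2 : convexHull ℚ {y ∈ G h | IsLatticePt y} ⊆ convexHull ℚ T0 :=
            convexHull_mono hsub
          rw [heq] at hxG
          exact h2 hxG
      · intro x hx
        simp only [Set.mem_iUnion] at hx
        obtain ⟨h, hpos, hxs⟩ := hx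
        have hre : wSlice w h P + (h:ℚ) • F =
            convexHull ℚ ({y | y ∈ P ∧ IsLatticePt y ∧ pairing w y = (h:ℚ)} +
              (h:ℚ) • lattF) := by
          rw [convexHull_add]
          congr 1
          conv_lhs => rw [lattPts_hull hFlatpoly]
          rw [convexHull_smul]
        have hsub2 : {y | y ∈ P ∧ IsLatticePt y ∧ pairing w y = (h:ℚ)} +
            (h:ℚ) • lattF ⊆ T0 := by
          rw [hT0def]
          intro y hy
          apply Set.mem_union_right
          simp only [Set.mem_iUnion]
          exact ⟨h, hpos, hy⟩
        rw [hre] at hxs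
        exact convexHull_mono hsub2 hxs
    · have hT0U : T0 ⊆ ((⋃ h : ℤ, ⋃ _ : h < 0, G h) ∪
          ⋃ h : ℤ, ⋃ _ : (0:ℤ) ≤ h, (wSlice w h P + (h : ℚ) • F)) := by
        rw [hT0def]
        apply Set.union_subset
        · intro x hx
          simp only [Set.mem_iUnion] at hx
          obtain ⟨h, hneg, hxl⟩ := hx
          apply Set.mem_union_left
          simp only [Set.mem_iUnion]
          exact ⟨h, hneg, hxl.1⟩
        · intro x hx
          simp only [Set.mem_iUnion] at hx
          obtain ⟨h, hpos, hxs⟩ := hx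
          apply Set.mem_union_right
          simp only [Set.mem_iUnion]
          refine ⟨h, hpos, ?_⟩
          have hs : {y | y ∈ P ∧ IsLatticePt y ∧ pairing w y = (h:ℚ)} + (h:ℚ) • lattF ⊆
              wSlice w h P + (h:ℚ) • F :=
            Set.add_subset_add (subset_convexHull ℚ _)
              (Set.smul_set_mono (Set.sep_subset _ _))
          exact hs hxs
      exact convexHull_min (hT0U.trans (subset_convexHull ℚ _)) (convex_convexHull ℚ _)
  have hT0lat : ∀ x ∈ T0, IsLatticePt x := by
    intro x hx
    rw [hT0def] at hx
    rcases hx with hx | hx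
    · simp only [Set.mem_iUnion] at hx
      obtain ⟨h, hneg, hmem⟩ := hx
      exact hmem.2
    · simp only [Set.mem_iUnion] at hx
      obtain ⟨h, hpos, hmem⟩ := hx
      rw [Set.mem_add] at hmem
      obtain ⟨y, hy, bb2, hbb2, hxe⟩ := hmem
      obtain ⟨f, hf, hfe⟩ := hbb2
      have : IsLatticePt (y + (h:ℚ) • f) := hy.2.1.add_zsmul hf.2 h
      rw [← hxe, ← hfe]
      exact this
  have hAlat : ∀ x, IsLatticePt x → IsLatticePt (A x) := by
    intro x hxl
    obtain ⟨z', hz'⟩ := hxl.pairing_int (w := w)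
    have hcomp : A x = x + ((-z' : ℤ) : ℚ) • f0 := by
      rw [hAdef, shearEquiv_apply, hz']
      push_cast
      rw [neg_smul, ← sub_eq_add_neg]
    rw [hcomp]
    exact hxl.add_zsmul hf0lat (-z')
  have hAslat : ∀ x, IsLatticePt x → IsLatticePt (A.symm x) := by
    intro x hxl
    obtain ⟨z', hz'⟩ := hxl.pairing_int (w := w)
    have hcomp : A.symm x = x + (z' : ℚ) • f0 := by
      rw [hAdef, shearEquiv_symm_apply, hz']
    rw [hcomp]
    exact hxl.add_zsmul hf0lat z'
  have hAbound : ∀ x ∈ T0, ∀ i, |A x i| ≤ C := by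
    intro x hx i
    rw [hT0def] at hx
    rcases hx with hx | hx
    · simp only [Set.mem_iUnion] at hx
      obtain ⟨h, hneg, hxG, hxlat⟩ := hx
      have hx1 : x + (-(h:ℚ)) • f0 ∈ wSlice w h P :=
        (hG h hneg).2.2 (Set.add_mem_add hxG (Set.smul_mem_smul_set hf0F))
      have hpx : pairing w x = (h:ℚ) := by
        have h2 := hslice_level h _ hx1
        rw [pairing_add, pairing_smul, hf0pair, mul_zero, add_zero] at h2
        exact h2
      have hAx : A x = x + (-(h:ℚ)) • f0 := by
        rw [hAdef, shearEquiv_apply, hpx, neg_smul, ← sub_eq_add_neg]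
      have hmem : A x ∈ P := by
        rw [hAx]
        exact hslice_subP h hx1
      exact (hbox _ hmem i).trans hRC
    · simp only [Set.mem_iUnion] at hx
      obtain ⟨h, hpos, hmem⟩ := hx
      rw [Set.mem_add] at hmem
      obtain ⟨y, hy, bb2, hbb2, hxe⟩ := hmem
      obtain ⟨f, hf, hfe⟩ := hbb2
      have hfF : f ∈ F := hf.1
      have hfw : pairing w f = 0 := hF0 f hfF
      have hpx : pairing w x = (h:ℚ) := by
        rw [← hxe, ← hfe, pairing_add, pairing_smul, hfw, mul_zero, add_zero, hy.2.2]
      have hAxi : A x i = y i + (h:ℚ) * (f i - f0 i) := by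
        rw [hAdef, shearEquiv_apply, hpx]
        have hxe' : x = y + (h:ℚ) • f := by rw [← hxe, ← hfe]
        rw [hxe']
        show (y i + (h:ℚ) * f i) - (h:ℚ) * f0 i = y i + (h:ℚ) * (f i - f0 i)
        ring
      have hyP : y ∈ P := hy.1
      have hhb : |(h:ℚ)| ≤ R * W := by
        have h3 := hpairB y hyP
        rw [hy.2.2] at h3
        exact h3
      have hΔ0 : (0:ℚ) ≤ |f i - f0 i| := abs_nonneg _
      have htri : |f i - f0 i| ≤ |f i - fv i| + |fv i - f0 i| := abs_sub_le _ _ _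
      have e1 := hFdiam f hfF i
      have e2 : (β*W) * |fv i - f0 i| ≤ 2*R := by
        rw [abs_sub_comm]
        exact hFdiam f0 hf0F i
      have e3 : (β*W) * |f i - f0 i| ≤ 4*R := by
        have h4 := mul_le_mul_of_nonneg_left htri hβW0.le
        rw [mul_add] at h4
        linarith
      have e4 : |(h:ℚ)| * |f i - f0 i| ≤ 4*R^2/β := by
        rw [le_div_iff₀ hβ0]
        have f1 : |(h:ℚ)| * |f i - f0 i| * β ≤ (R*W) * |f i - f0 i| * β :=
          mul_le_mul_of_nonneg_right (mul_le_mul_of_nonneg_right hhb hΔ0) hβ0.le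
        have f2 : (R*W) * |f i - f0 i| * β = R * ((β*W) * |f i - f0 i|) := by ring
        have f3 : R * ((β*W) * |f i - f0 i|) ≤ R * (4*R) :=
          mul_le_mul_of_nonneg_left e3 hR0.le
        nlinarith [f1, f3]
      calc |A x i| = |y i + (h:ℚ)*(f i - f0 i)| := by rw [hAxi]
        _ ≤ |y i| + |(h:ℚ)*(f i - f0 i)| := abs_add_le _ _
        _ = |y i| + |(h:ℚ)| * |f i - f0 i| := by rw [abs_mul]
        _ ≤ R + 4*R^2/β := add_le_add (hbox y hyP i) e4
        _ = C := by rw [hCdef]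
  refine ⟨convexHull ℚ (A '' T0), ⟨A '' T0, ?_, rfl⟩, A, hAlat, hAslat, ?_⟩
  · rintro y ⟨x, hx, rfl⟩
    exact ⟨hAlat x (hT0lat x hx), fun i => hAbound x hx i⟩
  · rw [hQ]
    have h1 : A '' (convexHull ℚ T0) = (shearMap w f0) '' (convexHull ℚ T0) := rfl
    have h2 : A '' T0 = (shearMap w f0) '' T0 := rfl
    rw [h1, h2]
    exact (shearMap w f0).image_convexHull T0
end
end

section
/- The simplex P := conv{(1,0,0), (0,1,0), (0,0,1), (−1,−1,−3)} associated to the weighted projective space ℙ(1,1,1,3) is mutated by the width vector w = (−1,2,0) with factor F := conv{(0,0,0), (2,1,3)} to the simplex conv{(−1,−1,−3), (0,0,1), (0,1,0), (4,3,6)} associated to ℙ(1,1,4,6); i.e., mut_w(P,F) = conv{(−1,−1,−3), (0,0,1), (0,1,0), (4,3,6)}. -/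
open Set Pointwise

noncomputable section

/-! Write `v = (-1,-1,-3)`, `u = (2,1,3)` and `eᵢ` for the unit vectors. The only vertices of
`P(1,1,1,3)` of negative height are `e₁ = v + u` and `v`, both at height `-1`, and they span
`{v} + F = [v, e₁]`. In barycentric coordinates `x = a₁e₁ + a₂e₂ + a₃e₃ + a₄v` the relations
`e₁ = v + u` and `2u = (4,3,6) - e₂` give
`x + c•u = (a₁ + a₄)v + a₃e₃ + (a₂ - (a₁ + c)/2)e₂ + ((a₁ + c)/2)(4,3,6)`. Since
`⟨w, x⟩ = -a₁ + 2a₂ - a₄`, these weights are nonnegative whenever `0 ≤ c ≤ ⟨w, x⟩`, and the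
slices `w_h(P) + hF`, `h ≥ 0`, consist of such points. Conversely the vertices of `P(1,1,4,6)`
are `v ∈ G_{-1}`, `e₃ ∈ w₀(P)`, `e₂ ∈ w₂(P)` and `e₂ + 2u ∈ w₂(P) + 2F`. -/

section ConvexHull

variable {R E : Type*} [Field R] [LinearOrder R] [IsStrictOrderedRing R]
  [AddCommGroup E] [Module R E]

theorem mem_convexHull_range_iff {ι : Type*} [Fintype ι] {v : ι → E} {x : E} :
    x ∈ convexHull R (range v) ↔ ∃ a ∈ stdSimplex R ι, ∑ i, a i • v i = x := by
  classical
  constructor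
  · refine fun hx => convexHull_min ?_
      ((convex_stdSimplex R ι).linear_image (Fintype.linearCombination R v)) hx
    rintro _ ⟨j, rfl⟩
    exact ⟨_, ite_eq_mem_stdSimplex R j, by simp [Fintype.linearCombination_apply]⟩
  · rintro ⟨a, ⟨ha₀, ha₁⟩, rfl⟩
    exact mem_convexHull_of_exists_fintype a v ha₀ ha₁ mem_range_self rfl

theorem mem_convexHull_four_iff {p q r s x : E} :
    x ∈ convexHull R {p, q, r, s} ↔ ∃ a b c d : R, 0 ≤ a ∧ 0 ≤ b ∧ 0 ≤ c ∧ 0 ≤ d ∧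
      a + b + c + d = 1 ∧ a • p + b • q + c • r + d • s = x := by
  have hrange : ({p, q, r, s} : Set E) = range ![p, q, r, s] := by
    simp only [Matrix.range_cons, Matrix.range_empty, union_empty, singleton_union]
  rw [hrange, mem_convexHull_range_iff]
  constructor
  · rintro ⟨a, ⟨ha₀, ha₁⟩, rfl⟩
    exact ⟨a 0, a 1, a 2, a 3, ha₀ 0, ha₀ 1, ha₀ 2, ha₀ 3,
      by simpa [Fin.sum_univ_four] using ha₁, by simp [Fin.sum_univ_four]⟩
  · rintro ⟨a, b, c, d, ha, hb, hc, hd, hsum, rfl⟩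
    refine ⟨![a, b, c, d], ⟨?_, by simpa [Fin.sum_univ_four]⟩, by simp [Fin.sum_univ_four]⟩
    intro i
    fin_cases i <;> assumption

end ConvexHull

theorem isLinearMap_pairing {n : ℕ} (w : Fin n → ℤ) : IsLinearMap ℚ (pairing w) where
  map_add x y := by simp only [pairing, Pi.add_apply, mul_add, Finset.sum_add_distrib]
  map_smul c x := by
    simp only [pairing, Pi.smul_apply, smul_eq_mul, Finset.mul_sum]
    exact Finset.sum_congr rfl fun _ _ => mul_left_comm _ _ _

theorem isLatticePt_vec3 (a b c : ℤ) : IsLatticePt (![a, b, c] : Fin 3 → ℚ) := by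
  intro i
  fin_cases i
  exacts [⟨a, rfl⟩, ⟨b, rfl⟩, ⟨c, rfl⟩]

section Mutation

variable {n : ℕ} {w : Fin n → ℤ} {P F : Set (Fin n → ℚ)} {G : ℤ → Set (Fin n → ℚ)}

theorem wSlice_subset {h : ℤ} (hP : Convex ℚ P) :
    wSlice w h P ⊆ {x | x ∈ P ∧ pairing w x = h} :=
  convexHull_min (fun _ hx => ⟨hx.1, hx.2.2⟩)
    (hP.inter (convex_hyperplane (isLinearMap_pairing w) _))

theorem mem_wSlice {h : ℤ} {x : Fin n → ℚ} (hxP : x ∈ P) (hx : IsLatticePt x)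
    (hxh : pairing w x = h) : x ∈ wSlice w h P :=
  subset_convexHull ℚ _ ⟨hxP, hx, hxh⟩

theorem mutation_subset {Q : Set (Fin n → ℚ)} (hQ : Convex ℚ Q) (hneg : ∀ h < 0, G h ⊆ Q)
    (hnonneg : ∀ h : ℤ, 0 ≤ h → wSlice w h P + (h : ℚ) • F ⊆ Q) : mutation w P F G ⊆ Q :=
  convexHull_min (union_subset (iUnion₂_subset hneg) (iUnion₂_subset hnonneg)) hQ

theorem subset_mutation_of_neg {h : ℤ} (hh : h < 0) : G h ⊆ mutation w P F G :=
  ((subset_iUnion₂ (s := fun h (_ : h < 0) => G h) h hh).trans subset_union_left).trans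
    (subset_convexHull ℚ _)

theorem add_smul_mem_mutation {h : ℤ} (hh : 0 ≤ h) {x f : Fin n → ℚ} (hx : x ∈ wSlice w h P)
    (hf : f ∈ F) : x + (h : ℚ) • f ∈ mutation w P F G :=
  subset_convexHull ℚ _ <| Or.inr <| mem_iUnion₂.2 ⟨h, hh, add_mem_add hx (smul_mem_smul_set hf)⟩

end Mutation

abbrev P₁₁₁₃ : Set (Fin 3 → ℚ) := convexHull ℚ {![1, 0, 0], ![0, 1, 0], ![0, 0, 1], ![-1, -1, -3]}

abbrev P₁₁₄₆ : Set (Fin 3 → ℚ) := convexHull ℚ {![-1, -1, -3], ![0, 0, 1], ![0, 1, 0], ![4, 3, 6]}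

abbrev F₂₁₃ : Set (Fin 3 → ℚ) := convexHull ℚ {![0, 0, 0], ![2, 1, 3]}

abbrev G₁₁₁₃ : ℤ → Set (Fin 3 → ℚ) := fun h => if h = -1 then {![-1, -1, -3]} else ∅

theorem pairing_width (x : Fin 3 → ℚ) : pairing ![-1, 2, 0] x = -x 0 + 2 * x 1 := by
  simp [pairing, Fin.sum_univ_three]

theorem left_mem_F₂₁₃ : (![0, 0, 0] : Fin 3 → ℚ) ∈ F₂₁₃ := subset_convexHull ℚ _ (by simp)

theorem right_mem_F₂₁₃ : (![2, 1, 3] : Fin 3 → ℚ) ∈ F₂₁₃ := subset_convexHull ℚ _ (by simp)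

theorem exists_smul_of_mem_F₂₁₃ {f : Fin 3 → ℚ} (hf : f ∈ F₂₁₃) :
    ∃ b : ℚ, 0 ≤ b ∧ b ≤ 1 ∧ f = b • ![2, 1, 3] := by
  rw [F₂₁₃, convexHull_pair] at hf
  obtain ⟨a, b, ha, hb, hab, rfl⟩ := hf
  refine ⟨b, hb, by linarith, ?_⟩
  ext i
  fin_cases i <;> simp

theorem singleton_add_F₂₁₃ :
    {![-1, -1, -3]} + F₂₁₃ = segment ℚ (![-1, -1, -3] : Fin 3 → ℚ) ![1, 0, 0] := by
  rw [F₂₁₃, convexHull_pair, singleton_add, segment_translate_image]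
  congr 1 <;> ext i <;> fin_cases i <;> norm_num

theorem add_smul_mem_P₁₁₄₆ {x : Fin 3 → ℚ} (hx : x ∈ P₁₁₁₃) {c : ℚ} (hc : 0 ≤ c)
    (hcx : c ≤ pairing ![-1, 2, 0] x) : x + c • ![2, 1, 3] ∈ P₁₁₄₆ := by
  obtain ⟨a₁, a₂, a₃, a₄, h₁, h₂, h₃, h₄, hsum, rfl⟩ := mem_convexHull_four_iff.1 hx
  have hcx' : c ≤ -a₁ + 2 * a₂ - a₄ := by
    convert hcx using 1
    simp [pairing_width]
    ring
  refine mem_convexHull_four_iff.2 ⟨a₁ + a₄, a₃, a₂ - (a₁ + c) / 2, (a₁ + c) / 2,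
    by linarith, h₃, by linarith, by linarith, by linarith, ?_⟩
  ext i
  fin_cases i <;> simp <;> ring

theorem eq_neg_one_of_mem_extremePoints {v : Fin 3 → ℚ} (hv : v ∈ P₁₁₁₃.extremePoints ℚ)
    {h : ℤ} (hh : h < 0) (hvh : pairing ![-1, 2, 0] v = h) :
    h = -1 ∧ (v = ![1, 0, 0] ∨ v = ![-1, -1, -3]) := by
  have hh' : (h : ℚ) < 0 := by exact_mod_cast hh
  rcases extremePoints_convexHull_subset hv with rfl | rfl | rfl | rfl <;>
    norm_num [pairing_width] at hvh
  · exact ⟨by exact_mod_cast hvh.symm, by simp⟩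
  · linarith
  · linarith
  · exact ⟨by exact_mod_cast hvh.symm, by simp⟩

theorem isMutData_P₁₁₁₃ : IsMutData ![-1, 2, 0] P₁₁₁₃ F₂₁₃ G₁₁₁₃ := by
  refine ⟨⟨{![0, 0, 0], ![2, 1, 3]}, ?_, by simp⟩, ⟨_, left_mem_F₂₁₃⟩, ?_, fun h hh => ?_⟩
  · simp only [Finset.mem_insert, Finset.mem_singleton]
    rintro _ (rfl | rfl)
    exacts [by simpa using isLatticePt_vec3 0 0 0, by simpa using isLatticePt_vec3 2 1 3]
  · refine fun x hx => convexHull_min ?_ (convex_hyperplane (isLinearMap_pairing _) 0) hx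
    simp only [insert_subset_iff, singleton_subset_iff, mem_ofPred_eq, pairing_width]
    norm_num
  by_cases h₁ : h = -1
  · subst h₁
    have hv : (![-1, -1, -3] : Fin 3 → ℚ) ∈ wSlice ![-1, 2, 0] (-1) P₁₁₁₃ :=
      mem_wSlice (subset_convexHull ℚ _ (by simp))
        (by simpa using isLatticePt_vec3 (-1) (-1) (-3)) (by norm_num [pairing_width])
    have he₁ : (![1, 0, 0] : Fin 3 → ℚ) ∈ wSlice ![-1, 2, 0] (-1) P₁₁₁₃ :=
      mem_wSlice (subset_convexHull ℚ _ (by simp))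
        (by simpa using isLatticePt_vec3 1 0 0) (by norm_num [pairing_width])
    simp only [G₁₁₁₃, if_true, Int.cast_neg, Int.cast_one, neg_neg, one_smul,
      singleton_add_F₂₁₃]
    refine ⟨Or.inr ⟨{![-1, -1, -3]}, by simpa using isLatticePt_vec3 (-1) (-1) (-3), by simp⟩,
      ?_, (convex_convexHull ℚ _).segment_subset hv he₁⟩
    rintro v ⟨hv, hvh⟩
    rcases (eq_neg_one_of_mem_extremePoints hv hh hvh).2 with rfl | rfl
    exacts [right_mem_segment _ _ _, left_mem_segment _ _ _]
  · have hG : G₁₁₁₃ h = ∅ := if_neg h₁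
    refine ⟨Or.inl hG, fun v ⟨hv, hvh⟩ => absurd (eq_neg_one_of_mem_extremePoints hv hh hvh).1 h₁,
      by simp [hG]⟩

theorem mutation_P₁₁₁₃ : mutation ![-1, 2, 0] P₁₁₁₃ F₂₁₃ G₁₁₁₃ = P₁₁₄₆ := by
  refine (mutation_subset (convex_convexHull ℚ _) (fun h _ => ?_) fun h hh => ?_).antisymm
    (convexHull_min ?_ (convex_convexHull ℚ _))
  · by_cases h₁ : h = -1
    · simpa [G₁₁₁₃, h₁] using subset_convexHull ℚ _ (by simp)
    · simp [G₁₁₁₃, h₁]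
  · rintro _ ⟨x, hx, _, ⟨f, hf, rfl⟩, rfl⟩
    obtain ⟨hxP, hxh⟩ := wSlice_subset (convex_convexHull ℚ _) hx
    obtain ⟨b, hb₀, hb₁, rfl⟩ := exists_smul_of_mem_F₂₁₃ hf
    have hh' : (0 : ℚ) ≤ h := by exact_mod_cast hh
    simp only [smul_smul]
    exact add_smul_mem_P₁₁₄₆ hxP (by positivity) (by rw [hxh]; nlinarith)
  · have he₃ : (![0, 0, 1] : Fin 3 → ℚ) ∈ wSlice ![-1, 2, 0] 0 P₁₁₁₃ :=
      mem_wSlice (subset_convexHull ℚ _ (by simp))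
        (by simpa using isLatticePt_vec3 0 0 1) (by norm_num [pairing_width])
    have he₂ : (![0, 1, 0] : Fin 3 → ℚ) ∈ wSlice ![-1, 2, 0] 2 P₁₁₁₃ :=
      mem_wSlice (subset_convexHull ℚ _ (by simp))
        (by simpa using isLatticePt_vec3 0 1 0) (by norm_num [pairing_width])
    simp only [insert_subset_iff, singleton_subset_iff]
    refine ⟨subset_mutation_of_neg (h := -1) (by norm_num) (by simp), ?_, ?_, ?_⟩
    · simpa using add_smul_mem_mutation (G := G₁₁₁₃) le_rfl he₃ left_mem_F₂₁₃
    · simpa using add_smul_mem_mutation (G := G₁₁₁₃) zero_le_two he₂ left_mem_F₂₁₃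
    · convert add_smul_mem_mutation (G := G₁₁₁₃) zero_le_two he₂ right_mem_F₂₁₃ using 1
      ext i; fin_cases i <;> norm_num

/-- The simplex of `ℙ(1,1,1,3)` is mutated by the width vector `w = (-1,2,0)` with factor
`F = conv{(0,0,0),(2,1,3)}` (and `G_{-1} = {(-1,-1,-3)}`) to the simplex of `ℙ(1,1,4,6)`. -/
theorem mutation_P1113_to_P1146 :
    IsMutData ![-1, 2, 0]
      (convexHull ℚ {![1, 0, 0], ![0, 1, 0], ![0, 0, 1], ![-1, -1, -3]})
      (convexHull ℚ {![0, 0, 0], ![2, 1, 3]})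
      (fun h => if h = -1 then {![-1, -1, -3]} else ∅) ∧
    mutation ![-1, 2, 0]
      (convexHull ℚ {![1, 0, 0], ![0, 1, 0], ![0, 0, 1], ![-1, -1, -3]})
      (convexHull ℚ {![0, 0, 0], ![2, 1, 3]})
      (fun h => if h = -1 then {![-1, -1, -3]} else ∅) =
    convexHull ℚ {![-1, -1, -3], ![0, 0, 1], ![0, 1, 0], ![4, 3, 6]} :=
  ⟨isMutData_P₁₁₁₃, mutation_P₁₁₁₃⟩
end
end

section
/- In the plane, the vertices of the (rational) dual of a lattice polygon P with 0 in its interior determine all nontrivial mutation directions: if mut_w(P,F) is a combinatorial mutation of P that is not equal to P, then w is the primitive generator of the ray through some vertex of the dual polygon P*. -/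
open Set Pointwise

noncomputable section

/-!
The functional `⟨w, ·⟩` attains its minimum `h` over `P` at a vertex `v`, and `h < 0` because `0`
is interior. The mutation data at height `h` put `v` into `G h + (-h) • F ⊆ wSlice w h P`, so a
nontrivial factor `F` forces two distinct lattice points `p ≠ q` of `P` at height `h`. Then
`u = w / (-h)` lies in `P*` with `⟨u, p⟩ = ⟨u, q⟩ = -1`, and in the plane these two equations cut
out the single point `u` of `P*`, which is therefore a vertex.
-/

section LinearFunctional

variable {𝕜 E : Type*} [Field 𝕜] [LinearOrder 𝕜] [IsStrictOrderedRing 𝕜] [AddCommGroup E]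
  [Module 𝕜 E] (f : E →ₗ[𝕜] 𝕜) {m : 𝕜}

theorem isExtreme_setOf_eq_of_forall_le {A : Set E} (hA : ∀ x ∈ A, m ≤ f x) :
    IsExtreme 𝕜 A {x ∈ A | f x = m} := by
  refine ⟨fun x hx => hx.1, fun x₁ hx₁ x₂ hx₂ x hx hseg => ⟨hx₁, ?_⟩⟩
  obtain ⟨a, b, ha, hb, hab, rfl⟩ := hseg
  have hcomb : a * f x₁ + b * f x₂ = m := by simpa using hx.2
  refine le_antisymm (not_lt.mp fun h => ?_) (hA x₁ hx₁)
  have hm : a * m + b * m = m := by rw [← add_mul, hab, one_mul]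
  linarith [mul_lt_mul_of_pos_left h ha, mul_le_mul_of_nonneg_left (hA x₂ hx₂) hb.le]

theorem mem_convexHull_filter_of_forall_le {S : Finset E} (hS : ∀ s ∈ S, m ≤ f s) {x : E}
    (hx : x ∈ convexHull 𝕜 (S : Set E)) (hfx : f x = m) :
    x ∈ convexHull 𝕜 (S.filter (f · = m) : Set E) := by
  classical
  rw [Finset.mem_convexHull'] at hx ⊢
  obtain ⟨c, hc0, hc1, rfl⟩ := hx
  have hsum : ∑ s ∈ S, c s * (f s - m) = 0 := by
    simp only [map_sum, map_smul, smul_eq_mul] at hfx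
    simp only [mul_sub, Finset.sum_sub_distrib, ← Finset.sum_mul, hfx, hc1, one_mul, sub_self]
  have hvanish : ∀ s ∈ S, f s ≠ m → c s = 0 := fun s hs hne =>
    (mul_eq_zero.mp ((Finset.sum_eq_zero_iff_of_nonneg fun s hs =>
      mul_nonneg (hc0 s hs) (sub_nonneg.mpr (hS s hs))).mp hsum s hs)).resolve_right
      (sub_ne_zero.mpr hne)
  refine ⟨c, fun s hs => hc0 s (Finset.mem_filter.mp hs).1, ?_, ?_⟩
  · rw [Finset.sum_filter_of_ne fun s hs hc => not_not.mp (mt (hvanish s hs) hc), hc1]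
  · refine Finset.sum_filter_of_ne fun s hs hc => not_not.mp fun hne => hc ?_
    rw [hvanish s hs hne, zero_smul]

end LinearFunctional

theorem Set.Nontrivial.of_convexHull {𝕜 E : Type*} [Semiring 𝕜] [PartialOrder 𝕜]
    [AddCommMonoid E] [Module 𝕜 E] {s : Set E} (h : (convexHull 𝕜 s).Nontrivial) :
    s.Nontrivial := by
  by_contra hs
  have hsub := Set.not_nontrivial_iff.mp hs
  exact hs ((hsub.convex (𝕜 := 𝕜)).convexHull_eq ▸ h)

section OrderTopology

variable {𝕜 : Type*} [Field 𝕜] [LinearOrder 𝕜] [IsStrictOrderedRing 𝕜] [TopologicalSpace 𝕜]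
  [OrderTopology 𝕜]

theorem exists_pos_smul_mem_of_mem_nhds_zero {E : Type*} [AddCommGroup E] [Module 𝕜 E]
    [TopologicalSpace E] [ContinuousSMul 𝕜 E] {s : Set E} (hs : s ∈ nhds (0 : E)) (v : E) :
    ∃ c : 𝕜, 0 < c ∧ c • v ∈ s := by
  have hlim : Filter.Tendsto (fun c : 𝕜 => c • v) (nhdsWithin 0 (Set.Ioi 0)) (nhds 0) := by
    have hcont : Continuous fun c : 𝕜 => c • v := continuous_id.smul continuous_const
    exact (hcont.tendsto' 0 0 (zero_smul 𝕜 v)).mono_left nhdsWithin_le_nhds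
  exact ((hlim.eventually hs).and self_mem_nhdsWithin).exists.imp fun c hc => ⟨hc.2, hc.1⟩

theorem exists_dotProduct_neg_of_zero_mem_interior {n : ℕ} {P : Set (Fin n → 𝕜)}
    (h0 : (0 : Fin n → 𝕜) ∈ interior P) {ω : Fin n → 𝕜} (hω : ω ≠ 0) :
    ∃ x ∈ P, ω ⬝ᵥ x < 0 := by
  obtain ⟨c, hc, hcP⟩ :=
    exists_pos_smul_mem_of_mem_nhds_zero (𝕜 := 𝕜) (mem_interior_iff_mem_nhds.mp h0) (-ω)
  refine ⟨_, hcP, ?_⟩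
  have hωω : 0 < ω ⬝ᵥ ω :=
    lt_of_le_of_ne (Finset.sum_nonneg fun i _ => mul_self_nonneg (ω i))
      (Ne.symm (dotProduct_self_eq_zero.not.mpr hω))
  rw [dotProduct_smul, dotProduct_neg, smul_eq_mul]
  exact mul_neg_of_pos_of_neg hc (neg_neg_of_pos hωω)

end OrderTopology

section Plane

variable {𝕜 : Type*} [Field 𝕜] [LinearOrder 𝕜] [IsStrictOrderedRing 𝕜]

theorem eq_of_dotProduct_eq_of_dotProduct_rot_eq {v a b : Fin 2 → 𝕜} (hv : v ≠ 0)
    (h : v ⬝ᵥ a = v ⬝ᵥ b) (hrot : ![-v 1, v 0] ⬝ᵥ a = ![-v 1, v 0] ⬝ᵥ b) : a = b := by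
  have hvv : v 0 * v 0 + v 1 * v 1 ≠ 0 := by
    simpa [dotProduct, Fin.sum_univ_two] using dotProduct_self_eq_zero.not.mpr hv
  simp only [dotProduct, Fin.sum_univ_two, Matrix.cons_val_zero, Matrix.cons_val_one] at h hrot
  exact funext <| Fin.forall_fin_two.mpr
    ⟨mul_left_cancel₀ hvv (by linear_combination v 0 * h - v 1 * hrot),
      mul_left_cancel₀ hvv (by linear_combination v 1 * h + v 0 * hrot)⟩

/- Minimise `v` and then, on the resulting face, the rotated functional: in the plane the two
level sets meet in a single point, which is therefore a vertex. -/
theorem exists_mem_extremePoints_forall_dotProduct_le {S : Finset (Fin 2 → 𝕜)}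
    (hS : S.Nonempty) {v : Fin 2 → 𝕜} (hv : v ≠ 0) :
    ∃ t ∈ (convexHull 𝕜 (S : Set (Fin 2 → 𝕜))).extremePoints 𝕜,
      ∀ y ∈ convexHull 𝕜 (S : Set (Fin 2 → 𝕜)), v ⬝ᵥ t ≤ v ⬝ᵥ y := by
  classical
  set P := convexHull 𝕜 (S : Set (Fin 2 → 𝕜))
  set ℓ := dotProductBilin 𝕜 𝕜 v
  set ℓ' := dotProductBilin 𝕜 𝕜 ![-v 1, v 0]
  obtain ⟨s, hsS, hs⟩ := S.exists_min_image ℓ hS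
  have hmin : ∀ y ∈ P, ℓ s ≤ ℓ y := fun y hy =>
    convexHull_min hs (convex_halfSpace_ge ℓ.isLinear _) hy
  obtain ⟨t, htT, ht⟩ := (S.filter (ℓ · = ℓ s)).exists_min_image ℓ' ⟨s, by simp [hsS]⟩
  obtain ⟨htS, hts⟩ := Finset.mem_filter.mp htT
  have hface : ∀ x ∈ {x ∈ P | ℓ x = ℓ s}, ℓ' t ≤ ℓ' x := fun x hx =>
    convexHull_min ht (convex_halfSpace_ge ℓ'.isLinear _)
      (mem_convexHull_filter_of_forall_le ℓ hs hx.1 hx.2)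
  have hedge : {x ∈ {x ∈ P | ℓ x = ℓ s} | ℓ' x = ℓ' t} = {t} :=
    Set.eq_singleton_iff_unique_mem.mpr ⟨⟨⟨subset_convexHull 𝕜 _ htS, hts⟩, rfl⟩,
      fun x hx => eq_of_dotProduct_eq_of_dotProduct_rot_eq hv (hx.1.2.trans hts.symm) hx.2⟩
  refine ⟨t, ?_, fun y hy => hts.trans_le (hmin y hy)⟩
  rw [← isExtreme_singleton, ← hedge]
  exact (isExtreme_setOf_eq_of_forall_le ℓ hmin).trans
    (isExtreme_setOf_eq_of_forall_le ℓ' hface)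

theorem eq_of_dotProduct_eq_neg_one {a u p q : Fin 2 → 𝕜} (hpq : p ≠ q)
    (hap : a ⬝ᵥ p = -1) (haq : a ⬝ᵥ q = -1) (hup : u ⬝ᵥ p = -1) (huq : u ⬝ᵥ q = -1) :
    a = u := by
  simp only [dotProduct, Fin.sum_univ_two] at hap haq hup huq
  by_cases hdet : p 0 * q 1 - p 1 * q 0 = 0
  · exact absurd (funext <| Fin.forall_fin_two.mpr
      ⟨by linear_combination (-(q 0)) * hup + p 0 * huq - u 1 * hdet,
        by linear_combination (-(q 1)) * hup + p 1 * huq + u 0 * hdet⟩) hpq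
  exact funext <| Fin.forall_fin_two.mpr
    ⟨mul_right_cancel₀ hdet (by linear_combination q 1 * (hap - hup) - p 1 * (haq - huq)),
      mul_right_cancel₀ hdet (by linear_combination -(q 0) * (hap - hup) + p 0 * (haq - huq))⟩

end Plane

theorem IsPrimitive.intCast_ne_zero {n : ℕ} {w : Fin n → ℤ} (hw : IsPrimitive w) :
    (fun i => (w i : ℚ)) ≠ 0 := by
  intro h
  have hgcd : Finset.univ.gcd w = 0 :=
    Finset.gcd_eq_zero_iff.mpr fun i _ => by simpa using congrFun h i
  exact zero_ne_one (hgcd.symm.trans hw)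

theorem IsLatticePt.exists_pairing_eq {n : ℕ} {x : Fin n → ℚ} (hx : IsLatticePt x)
    (w : Fin n → ℤ) : ∃ h : ℤ, pairing w x = h := by
  choose z hz using hx
  exact ⟨∑ i, w i * z i, by simp [pairing, hz]⟩

theorem IsMutData.wSlice_nontrivial {n : ℕ} {w : Fin n → ℤ} {P F : Set (Fin n → ℚ)}
    {G : ℤ → Set (Fin n → ℚ)} (hdata : IsMutData w P F G) (hF : ¬ F.Subsingleton) {h : ℤ}
    (hh : h < 0) {v : Fin n → ℚ} (hv : v ∈ P.extremePoints ℚ) (hvh : pairing w v = h) :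
    (wSlice w h P).Nontrivial := by
  obtain ⟨-, -, -, hG⟩ := hdata
  obtain ⟨-, hvG, hGslice⟩ := hG h hh
  obtain ⟨g, hg, _, ⟨f, hf, rfl⟩, rfl⟩ := hvG ⟨hv, hvh⟩
  obtain ⟨f', hf', hne⟩ := (Set.not_subsingleton_iff.mp hF).exists_ne f
  have hc : -(h : ℚ) ≠ 0 := by simpa using hh.ne
  refine ⟨_, hGslice (Set.add_mem_add hg (Set.smul_mem_smul_set hf)),
    _, hGslice (Set.add_mem_add hg (Set.smul_mem_smul_set hf')), fun heq => hne ?_⟩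
  exact (smul_right_injective _ hc (add_left_cancel heq)).symm

theorem mem_extremePoints_dualP {P : Set (Fin 2 → ℚ)} {u p q : Fin 2 → ℚ} (hu : u ∈ dualP P)
    (hp : p ∈ P) (hq : q ∈ P) (hpq : p ≠ q) (hup : dpair u p = -1) (huq : dpair u q = -1) :
    u ∈ (dualP P).extremePoints ℚ := by
  have hface : ∀ r ∈ P,
      IsExtreme ℚ (dualP P) {a ∈ dualP P | dotProductBilin ℚ ℚ r a = -1} := fun r hr =>
    isExtreme_setOf_eq_of_forall_le _ fun a ha => (dotProduct_comm r a).trans_ge (ha r hr)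
  have hvertex : {a ∈ dualP P | dotProductBilin ℚ ℚ p a = -1} ∩
      {a ∈ dualP P | dotProductBilin ℚ ℚ q a = -1} = {u} := by
    refine Set.eq_singleton_iff_unique_mem.mpr
      ⟨⟨⟨hu, (dotProduct_comm p u).trans hup⟩, ⟨hu, (dotProduct_comm q u).trans huq⟩⟩, ?_⟩
    rintro a ⟨⟨-, hap⟩, ⟨-, haq⟩⟩
    exact eq_of_dotProduct_eq_neg_one hpq ((dotProduct_comm a p).trans hap)
      ((dotProduct_comm a q).trans haq) hup huq
  rw [← isExtreme_singleton, ← hvertex]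
  exact (hface p hp).inter (hface q hq)

theorem inv_neg_smul_mem_extremePoints_dualP {P : Set (Fin 2 → ℚ)} {ω p q : Fin 2 → ℚ}
    {h : ℚ} (hh : h < 0) (hmin : ∀ y ∈ P, h ≤ ω ⬝ᵥ y) (hp : p ∈ P) (hq : q ∈ P) (hpq : p ≠ q)
    (hωp : ω ⬝ᵥ p = h) (hωq : ω ⬝ᵥ q = h) : (-h)⁻¹ • ω ∈ (dualP P).extremePoints ℚ := by
  have hscale : ∀ y, dpair ((-h)⁻¹ • ω) y = -(ω ⬝ᵥ y / h) := fun y => by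
    rw [dpair, ← dotProduct, smul_dotProduct, smul_eq_mul, inv_neg, neg_mul, inv_mul_eq_div]
  have hdual : (-h)⁻¹ • ω ∈ dualP P := fun y hy => by
    rw [hscale, neg_le_neg_iff, div_le_one_of_neg hh]
    exact hmin y hy
  refine mem_extremePoints_dualP hdual hp hq hpq ?_ ?_
  · rw [hscale, hωp, div_self hh.ne]
  · rw [hscale, hωq, div_self hh.ne]

theorem planar_mutation_directions_general (w : Fin 2 → ℤ) (P F : Set (Fin 2 → ℚ))
    (G : ℤ → Set (Fin 2 → ℚ)) (hP : IsLatticePolytope P)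
    (h0 : (0 : Fin 2 → ℚ) ∈ interior P) (hw : IsPrimitive w)
    (hdata : IsMutData w P F G) (hF : ¬ F.Subsingleton) :
    ∃ u ∈ (dualP P).extremePoints ℚ, ∃ c : ℚ, 0 < c ∧
      (fun i => (w i : ℚ)) = c • u := by
  obtain ⟨S, hSlat, rfl⟩ := hP
  have hS : S.Nonempty :=
    Finset.coe_nonempty.mp (convexHull_nonempty_iff.mp ⟨0, interior_subset h0⟩)
  obtain ⟨t, ht, hmin⟩ := exists_mem_extremePoints_forall_dotProduct_le hS hw.intCast_ne_zero
  obtain ⟨h, hth⟩ := (hSlat t (extremePoints_convexHull_subset ht)).exists_pairing_eq w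
  have hh : (h : ℚ) < 0 := by
    obtain ⟨x, hx, hωx⟩ := exists_dotProduct_neg_of_zero_mem_interior h0 hw.intCast_ne_zero
    exact hth ▸ (hmin x hx).trans_lt hωx
  obtain ⟨p, ⟨hp, -, hph⟩, q, ⟨hq, -, hqh⟩, hpq⟩ :=
    (hdata.wSlice_nontrivial hF (Int.cast_lt_zero.mp hh) ht hth).of_convexHull (𝕜 := ℚ)
  refine ⟨_, inv_neg_smul_mem_extremePoints_dualP hh (fun y hy => hth ▸ hmin y hy) hp hq hpq
    hph hqh, -h, neg_pos.mpr hh, ?_⟩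
  rw [smul_smul, mul_inv_cancel₀ (neg_ne_zero.mpr hh.ne), one_smul]

/-- In the plane, nontrivial mutation directions are primitive generators of rays through
vertices of the dual polygon: if `mut_w(P,F)` is a combinatorial mutation of a lattice
polygon `P` (with `0` in its interior) with a positive-dimensional factor `F`, and the
mutation is not equal to `P`, then `w` is a positive multiple of a vertex of `P*`. -/
theorem planar_mutation_directions (w : Fin 2 → ℤ) (P F : Set (Fin 2 → ℚ))
    (G : ℤ → Set (Fin 2 → ℚ)) (hP : IsLatticePolytope P)
    (h0 : (0 : Fin 2 → ℚ) ∈ interior P) (hw : IsPrimitive w)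
    (hdata : IsMutData w P F G) (hF : ¬ F.Subsingleton)
    (hnontrivial : mutation w P F G ≠ P) :
    ∃ u ∈ (dualP P).extremePoints ℚ, ∃ c : ℚ, 0 < c ∧
      (fun i => (w i : ℚ)) = c • u :=
  planar_mutation_directions_general w P F G hP h0 hw hdata hF
end
end
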